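/- arXiv:2404.18321 — 4 statements merged into one kernel-verified Lean document; each statement's English description precedes it below -/
import Mathlib

section
/- Let N and C be finite nonempty sets, and let M = N → C be the set of semantic maps. Let p be a probability mass function on M that factorizes over cells, p(m) = ∏_{n∈N} p_n(m(n)), where each p_n is a strictly positive probability mass function on C. Let t ≥ 1 and, for each τ ∈ {1,…,t}, let ℓ_τ : M → ℝ be a strictly positive observation likelihood; define the marginal q_τ = ∑_{m∈M} ℓ_τ(m) p(m) and the posterior r_τ(m) = ℓ_τ(m) p(m) / q_τ, and assume each posterior factorizes over cells as r_τ(m) = ∏_{n∈N} r_{τ,n}(m(n)) with each r_{τ,n} a strictly positive probability mass function on C. Then the expected joint log-likelihood decomposes as ∑_{m∈M} p(m) · log(∏_{τ=1}^t ℓ_τ(m)) = ∑_{τ=1}^t ( log q_τ + ∑_{n∈N} ∑_{c∈C} p_n(c) · log( r_{τ,n}(c) / p_n(c) ) ). -/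
/-!
Since the posterior is `r = ℓ p / q`, every likelihood splits as
`log ℓ(m) = log q + log (r(m) / p(m))`, and for cell-wise factorized `p` and `r` the log-ratio
`log (r(m) / p(m))` is a sum of per-cell terms `log (r_n(m n) / p_n(m n))`. The expectation of
such a sum under the product distribution `p` only sees the marginals `p_n`.
-/

open Finset

section ProductDistribution

variable {ι κ R : Type*} [Fintype ι] [DecidableEq ι] [Fintype κ] [CommSemiring R]

theorem sum_prod_eq_one_of_sum_eq_one {f : ι → κ → R} (hf : ∀ i, ∑ k, f i k = 1) :
    ∑ x : ι → κ, ∏ i, f i (x i) = 1 := by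
  rw [← Fintype.prod_sum]
  exact prod_eq_one fun i _ ↦ hf i

theorem sum_prod_mul_apply_eq {f : ι → κ → R} (i : ι) (hf : ∀ j ≠ i, ∑ k, f j k = 1)
    (g : κ → R) :
    ∑ x : ι → κ, (∏ j, f j (x j)) * g (x i) = ∑ k, f i k * g k := by
  -- With `g` absorbed into the `i`-th factor, the sum over `x` factors coordinate-wise.
  have hsplit : ∀ x : ι → κ, (∏ j, f j (x j)) * g (x i)
      = ∏ j, f j (x j) * if j = i then g (x j) else 1 := fun x ↦ by
    rw [prod_mul_distrib, prod_ite_eq' univ i fun j ↦ g (x j), if_pos (mem_univ i)]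
  simp_rw [hsplit]
  rw [← Fintype.prod_sum fun j k ↦ f j k * if j = i then g k else 1,
    Fintype.prod_eq_single i fun j hj ↦ by simp only [if_neg hj, mul_one, hf j hj]]
  simp only [if_true]

theorem sum_prod_mul_sum_apply_eq {f : ι → κ → R} (hf : ∀ i, ∑ k, f i k = 1)
    (g : ι → κ → R) :
    ∑ x : ι → κ, (∏ i, f i (x i)) * ∑ i, g i (x i) = ∑ i, ∑ k, f i k * g i k := by
  simp_rw [mul_sum]
  rw [sum_comm]
  exact sum_congr rfl fun i _ ↦ sum_prod_mul_apply_eq i (fun j _ ↦ hf j) (g i)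

end ProductDistribution

theorem Real.log_eq_log_add_log_div_of_eq_mul_div {l p q r : ℝ} (hr : r = l * p / q)
    (hr0 : r ≠ 0) (hp0 : p ≠ 0) : Real.log l = Real.log q + Real.log (r / p) := by
  -- Lean's `l * p / 0 = 0` would contradict `r ≠ 0`.
  have hq0 : q ≠ 0 := by rintro rfl; simp [hr] at hr0
  have hl : l = q * (r / p) := by rw [hr]; field_simp
  have hrp : r / p ≠ 0 := div_ne_zero hr0 hp0
  rw [hl, Real.log_mul hq0 hrp]

theorem expected_log_likelihood_eq_of_factorized_posterior {N C : Type*} [Fintype N]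
    [DecidableEq N] [Fintype C] {pn rn : N → C → ℝ} (hpn : ∀ n c, pn n c ≠ 0)
    (hpn_sum : ∀ n, ∑ c, pn n c = 1) (hrn : ∀ n c, rn n c ≠ 0) (ℓ : (N → C) → ℝ) (q : ℝ)
    (hr : ∀ m : N → C, ∏ n, rn n (m n) = ℓ m * (∏ n, pn n (m n)) / q) :
    ∑ m : N → C, (∏ n, pn n (m n)) * Real.log (ℓ m)
      = Real.log q + ∑ n, ∑ c, pn n c * Real.log (rn n c / pn n c) := by
  have hlog : ∀ m : N → C,
      Real.log (ℓ m) = Real.log q + ∑ n, Real.log (rn n (m n) / pn n (m n)) := fun m ↦ by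
    rw [Real.log_eq_log_add_log_div_of_eq_mul_div (hr m)
        (prod_ne_zero_iff.2 fun n _ ↦ hrn n (m n)) (prod_ne_zero_iff.2 fun n _ ↦ hpn n (m n)),
      ← prod_div_distrib,
      Real.log_prod fun n _ ↦ div_ne_zero (hrn n (m n)) (hpn n (m n))]
  simp_rw [hlog, mul_add]
  rw [sum_add_distrib, ← sum_mul, sum_prod_eq_one_of_sum_eq_one hpn_sum,
    one_mul, sum_prod_mul_sum_apply_eq hpn_sum fun n c ↦ Real.log (rn n c / pn n c)]

theorem expected_log_likelihood_cellwise_decomposition_general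
    {N C : Type*} [Fintype N] [Fintype C]
    [DecidableEq N]
    (p : (N → C) → ℝ) (pn : N → C → ℝ)
    (hpn_pos : ∀ n c, 0 < pn n c) (hpn_sum : ∀ n, ∑ c, pn n c = 1)
    (hp : ∀ m : N → C, p m = ∏ n, pn n (m n))
    (t : ℕ)
    (ℓ : ℕ → (N → C) → ℝ) (hℓ_pos : ∀ τ ∈ Finset.range t, ∀ m, 0 < ℓ τ m)
    (q : ℕ → ℝ)
    (r : ℕ → (N → C) → ℝ) (hr : ∀ τ ∈ Finset.range t, ∀ m, r τ m = ℓ τ m * p m / q τ)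
    (rn : ℕ → N → C → ℝ)
    (hrn_pos : ∀ τ ∈ Finset.range t, ∀ n c, 0 < rn τ n c)
    (hr_fact : ∀ τ ∈ Finset.range t, ∀ m : N → C, r τ m = ∏ n, rn τ n (m n)) :
    ∑ m : N → C, p m * Real.log (∏ τ ∈ Finset.range t, ℓ τ m)
      = ∑ τ ∈ Finset.range t,
          (Real.log (q τ) + ∑ n, ∑ c, pn n c * Real.log (rn τ n c / pn n c)) := by
  calc ∑ m : N → C, p m * Real.log (∏ τ ∈ range t, ℓ τ m)
      = ∑ τ ∈ range t, ∑ m : N → C, (∏ n, pn n (m n)) * Real.log (ℓ τ m) := by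
        simp_rw [Real.log_prod fun τ hτ ↦ (hℓ_pos τ hτ _).ne', mul_sum, hp]
        exact sum_comm
    _ = _ := sum_congr rfl fun τ hτ ↦
        expected_log_likelihood_eq_of_factorized_posterior (fun n c ↦ (hpn_pos n c).ne')
          hpn_sum (fun n c ↦ (hrn_pos τ hτ n c).ne') (ℓ τ) (q τ) fun m ↦ by
            rw [← hr_fact τ hτ m, hr τ hτ m, hp m]

/-- Lemma 1 of the paper: the expected log-likelihood of a sequence of conditionally
independent observations, under a cell-wise independent map distribution `p`, decomposes
into per-observation marginal log-likelihood terms plus per-cell expected log-ratio terms. -/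
theorem expected_log_likelihood_cellwise_decomposition
    {N C : Type*} [Fintype N] [Fintype C] [Nonempty N] [Nonempty C]
    [DecidableEq N] [DecidableEq C]
    (p : (N → C) → ℝ) (pn : N → C → ℝ)
    (hpn_pos : ∀ n c, 0 < pn n c) (hpn_sum : ∀ n, ∑ c, pn n c = 1)
    (hp : ∀ m : N → C, p m = ∏ n, pn n (m n))
    (t : ℕ) (ht : 1 ≤ t)
    (ℓ : ℕ → (N → C) → ℝ) (hℓ_pos : ∀ τ ∈ Finset.range t, ∀ m, 0 < ℓ τ m)
    (q : ℕ → ℝ) (hq : ∀ τ ∈ Finset.range t, q τ = ∑ m : N → C, ℓ τ m * p m)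
    (r : ℕ → (N → C) → ℝ) (hr : ∀ τ ∈ Finset.range t, ∀ m, r τ m = ℓ τ m * p m / q τ)
    (rn : ℕ → N → C → ℝ)
    (hrn_pos : ∀ τ ∈ Finset.range t, ∀ n c, 0 < rn τ n c)
    (hrn_sum : ∀ τ ∈ Finset.range t, ∀ n, ∑ c, rn τ n c = 1)
    (hr_fact : ∀ τ ∈ Finset.range t, ∀ m : N → C, r τ m = ∏ n, rn τ n (m n)) :
    ∑ m : N → C, p m * Real.log (∏ τ ∈ Finset.range t, ℓ τ m)
      = ∑ τ ∈ Finset.range t,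
          (Real.log (q τ) + ∑ n, ∑ c, pn n c * Real.log (rn τ n c / pn n c)) :=
  expected_log_likelihood_cellwise_decomposition_general p pn hpn_pos hpn_sum hp t ℓ hℓ_pos q r hr
    rn hrn_pos hr_fact
end

section
/- Let V be a finite nonempty set and H a real inner product space. Let A : V → V → ℝ be symmetric, with nonnegative entries, and row-stochastic (∑_j A i j = 1 for each i). Define φ(x) = (1/2) ∑_{i,j∈V} A i j · ‖x i − x j‖² and G(x) i = 2 ∑_j A i j · (x i − x j), and equip V → H with the ℓ² norm ‖x‖² = ∑_i ‖x i‖². Then for every x : V → H and every ε ∈ ℝ: φ(x − ε·G(x)) ≤ φ(x) − ε(1 − 2ε) · ‖G(x)‖². -/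
/-!
Both `φ` and the cross term of its expansion are values of the weighted Dirichlet form
`D(x, y) = ∑ i j, A i j ⟪x i - x j, y i - y j⟫`, with `φ x = D(x, x) / 2`. Expanding the
square gives `φ(x - εg) = φ x - ε D(x, g) + (ε² / 2) D(g, g)`. Symmetry of `A` turns `D(x, g)`
into `2 ∑ i ⟪∑ j, A i j (x i - x j), g i⟫ = ∑ i ‖g i‖²` for `g = G x`, while the parallelogram
law and the row and column sums of `A` give `D(g, g) ≤ 4 ∑ i ‖g i‖²`.
-/

open Finset RealInnerProductSpace

section DirichletForm

variable {V H : Type*} [Fintype V] [NormedAddCommGroup H] [InnerProductSpace ℝ H]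

def dirichletForm (A : V → V → ℝ) (x y : V → H) : ℝ :=
  ∑ i, ∑ j, A i j * ⟪x i - x j, y i - y j⟫

theorem dirichletForm_self (A : V → V → ℝ) (x : V → H) :
    dirichletForm A x x = ∑ i, ∑ j, A i j * ‖x i - x j‖ ^ 2 := by
  simp only [dirichletForm, real_inner_self_eq_norm_sq]

theorem dirichletForm_sub_smul_self (A : V → V → ℝ) (x y : V → H) (ε : ℝ) :
    dirichletForm A (x - ε • y) (x - ε • y) =
      dirichletForm A x x - 2 * ε * dirichletForm A x y + ε ^ 2 * dirichletForm A y y := by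
  have hpoint : ∀ i j,
      ⟪(x - ε • y) i - (x - ε • y) j, (x - ε • y) i - (x - ε • y) j⟫ =
        ⟪x i - x j, x i - x j⟫ - 2 * ε * ⟪x i - x j, y i - y j⟫ +
          ε ^ 2 * ⟪y i - y j, y i - y j⟫ := by
    intro i j
    have hdiff : (x - ε • y) i - (x - ε • y) j = (x i - x j) - ε • (y i - y j) := by
      simp only [Pi.sub_apply, Pi.smul_apply, smul_sub]
      abel
    rw [hdiff, inner_sub_sub_self, inner_smul_left, inner_smul_right, inner_smul_right,
      inner_smul_left, real_inner_comm (x i - x j) (y i - y j)]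
    simp only [conj_trivial]
    ring
  simp only [dirichletForm, hpoint, mul_sum, ← sum_sub_distrib, ← sum_add_distrib]
  exact sum_congr rfl fun i _ => sum_congr rfl fun j _ => by ring

theorem dirichletForm_eq_two_mul_sum_inner {A : V → V → ℝ} (hA : ∀ i j, A i j = A j i)
    (x y : V → H) :
    dirichletForm A x y = 2 * ∑ i, ⟪∑ j, A i j • (x i - x j), y i⟫ := by
  set T := ∑ i, ∑ j, A i j * ⟪x i - x j, y i⟫
  -- Swapping `i ↔ j` and using `A i j = A j i` flips the sign of the `y j`-part.
  have hswap : ∑ i, ∑ j, A i j * ⟪x i - x j, y j⟫ = -T := by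
    rw [sum_comm, ← sum_neg_distrib]
    refine sum_congr rfl fun i _ => ?_
    rw [← sum_neg_distrib]
    refine sum_congr rfl fun j _ => ?_
    rw [hA j i, ← neg_sub (x i) (x j), inner_neg_left, mul_neg]
  calc dirichletForm A x y
      = T - ∑ i, ∑ j, A i j * ⟪x i - x j, y j⟫ := by
        simp only [dirichletForm, T, inner_sub_right, mul_sub, sum_sub_distrib]
    _ = 2 * T := by rw [hswap]; ring
    _ = 2 * ∑ i, ⟪∑ j, A i j • (x i - x j), y i⟫ := by
        simp only [T, sum_inner, real_inner_smul_left]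

theorem dirichletForm_self_le {A : V → V → ℝ} (hA_nonneg : ∀ i j, 0 ≤ A i j)
    (hA_row : ∀ i, ∑ j, A i j ≤ 1) (hA_col : ∀ j, ∑ i, A i j ≤ 1) (y : V → H) :
    dirichletForm A y y ≤ 4 * ∑ i, ‖y i‖ ^ 2 := by
  have hpoint : ∀ i j,
      A i j * ‖y i - y j‖ ^ 2 ≤ 2 * (A i j * ‖y i‖ ^ 2) + 2 * (A i j * ‖y j‖ ^ 2) := by
    intro i j
    have hpar := parallelogram_law_with_norm ℝ (y i) (y j)
    nlinarith [hA_nonneg i j, mul_nonneg (hA_nonneg i j) (sq_nonneg ‖y i + y j‖)]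
  have hrow : ∑ i, ∑ j, A i j * ‖y i‖ ^ 2 ≤ ∑ i, ‖y i‖ ^ 2 := by
    refine sum_le_sum fun i _ => ?_
    rw [← sum_mul]
    exact mul_le_of_le_one_left (sq_nonneg _) (hA_row i)
  have hcol : ∑ i, ∑ j, A i j * ‖y j‖ ^ 2 ≤ ∑ j, ‖y j‖ ^ 2 := by
    rw [sum_comm]
    refine sum_le_sum fun j _ => ?_
    rw [← sum_mul]
    exact mul_le_of_le_one_left (sq_nonneg _) (hA_col j)
  calc dirichletForm A y y
      ≤ ∑ i, ∑ j, (2 * (A i j * ‖y i‖ ^ 2) + 2 * (A i j * ‖y j‖ ^ 2)) := by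
        rw [dirichletForm_self]
        exact sum_le_sum fun i _ => sum_le_sum fun j _ => hpoint i j
    _ = 2 * ∑ i, ∑ j, A i j * ‖y i‖ ^ 2 + 2 * ∑ i, ∑ j, A i j * ‖y j‖ ^ 2 := by
        simp only [sum_add_distrib, mul_sum]
    _ ≤ 4 * ∑ i, ‖y i‖ ^ 2 := by linarith

end DirichletForm

theorem consensus_step_descent_inequality_general
    {V H : Type*} [Fintype V]
    [NormedAddCommGroup H] [InnerProductSpace ℝ H]
    (A : V → V → ℝ) (hA_symm : ∀ i j, A i j = A j i)
    (hA_nonneg : ∀ i j, 0 ≤ A i j) (hA_row : ∀ i, ∑ j, A i j = 1)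
    (φ : (V → H) → ℝ)
    (hφ : ∀ x, φ x = (1 / 2 : ℝ) * ∑ i, ∑ j, A i j * ‖x i - x j‖ ^ 2)
    (G : (V → H) → V → H)
    (hG : ∀ x i, G x i = (2 : ℝ) • ∑ j, A i j • (x i - x j))
    (x : V → H) (ε : ℝ) :
    φ (x - ε • G x) ≤ φ x - ε * (1 - 2 * ε) * ∑ i, ‖G x i‖ ^ 2 := by
  have hφD : ∀ z, φ z = dirichletForm A z z / 2 := fun z => by
    rw [hφ, dirichletForm_self]; ring
  have hhalf : ∀ i, ∑ j, A i j • (x i - x j) = (2 : ℝ)⁻¹ • G x i := fun i => by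
    rw [hG, smul_smul, inv_mul_cancel₀ two_ne_zero, one_smul]
  have hcross : dirichletForm A x (G x) = ∑ i, ‖G x i‖ ^ 2 := by
    simp only [dirichletForm_eq_two_mul_sum_inner hA_symm, hhalf, real_inner_smul_left,
      real_inner_self_eq_norm_sq, ← mul_sum]
    ring
  have hquad : dirichletForm A (G x) (G x) ≤ 4 * ∑ i, ‖G x i‖ ^ 2 :=
    dirichletForm_self_le hA_nonneg (fun i => (hA_row i).le)
      (fun j => by simp only [hA_symm _ j, hA_row j, le_refl]) (G x)
  rw [hφD, hφD, dirichletForm_sub_smul_self, hcross]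
  nlinarith [mul_le_mul_of_nonneg_left hquad (sq_nonneg ε)]

/-- Descent inequality for the consensus gradient step (Euclidean instance, `L = 4`):
`φ(x − ε G(x)) ≤ φ(x) − ε(1 − 2ε)‖G(x)‖²`, where the squared ℓ² norm of `G(x)` is
`∑ i ‖G(x) i‖²`. -/
theorem consensus_step_descent_inequality
    {V H : Type*} [Fintype V] [Nonempty V]
    [NormedAddCommGroup H] [InnerProductSpace ℝ H]
    (A : V → V → ℝ) (hA_symm : ∀ i j, A i j = A j i)
    (hA_nonneg : ∀ i j, 0 ≤ A i j) (hA_row : ∀ i, ∑ j, A i j = 1)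
    (φ : (V → H) → ℝ)
    (hφ : ∀ x, φ x = (1 / 2 : ℝ) * ∑ i, ∑ j, A i j * ‖x i - x j‖ ^ 2)
    (G : (V → H) → V → H)
    (hG : ∀ x i, G x i = (2 : ℝ) • ∑ j, A i j • (x i - x j))
    (x : V → H) (ε : ℝ) :
    φ (x - ε • G x) ≤ φ x - ε * (1 - 2 * ε) * ∑ i, ‖G x i‖ ^ 2 :=
  consensus_step_descent_inequality_general A hA_symm hA_nonneg hA_row φ hφ G hG x ε
end

section
/- Let V be a finite nonempty set and H a real inner product space. Let A : V → V → ℝ be symmetric, nonnegative, row-stochastic; define φ(x) = (1/2) ∑_{i,j} A i j ‖x i − x j‖², G(x) i = 2 ∑_j A i j (x i − x j), and use the ℓ² norm on V → H. Fix ε ∈ (0, 1/2), α ≥ 0 and C ≥ 0. Let x : V → H, let x̃ = x − ε·G(x), and let x⁺ = x̃ + α·g for some g : V → H with ‖g‖ ≤ C/√|V|. Then (ε/2)(1 − 2ε) · ‖G(x)‖² ≤ φ(x) − φ(x⁺) + α² · ( (1 + 16ε²)/(ε(1 − 2ε)) + 2 ) · C²/|V|. -/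
/-!
The energy `φ(x) = ½ ∑ A i j ‖x i - x j‖²` is a quadratic form whose gradient is `G`, so
`φ (x + h) = φ x + ⟪G x, h⟫ + φ h` exactly, and `φ h ≤ 2 ‖h‖²` since `A` is doubly stochastic.
For the step `h = α g - ε G x` this leaves `ε (1 - 2ε) ‖G x‖² - α (1 - 4ε) ⟪G x, g⟫ - 2α² ‖g‖²`
as a lower bound for the decrease; Young's inequality absorbs the cross term into half of the
first term at the cost of the `α²`-error.
-/

open scoped RealInnerProductSpace

theorem perturbed_gradient_step_bound {F : Type*} [NormedAddCommGroup F] [InnerProductSpace ℝ F]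
    {ε : ℝ} (hε : 0 < ε) (hε' : ε < 1 / 2) (α : ℝ) (u w : F) :
    ε / 2 * (1 - 2 * ε) * ‖u‖ ^ 2
      ≤ -⟪u, α • w - ε • u⟫ - 2 * ‖α • w - ε • u‖ ^ 2
        + α ^ 2 * ((1 + 16 * ε ^ 2) / (ε * (1 - 2 * ε)) + 2) * ‖w‖ ^ 2 := by
  set l := ε * (1 - 2 * ε)
  set t := α * (1 - 4 * ε)
  have hl : 0 < l := mul_pos hε (by linarith)
  have hexpand : -⟪u, α • w - ε • u⟫ - 2 * ‖α • w - ε • u‖ ^ 2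
      = l * ‖u‖ ^ 2 - t * ⟪u, w⟫ - 2 * α ^ 2 * ‖w‖ ^ 2 := by
    rw [inner_sub_right, real_inner_smul_right, real_inner_smul_right, real_inner_self_eq_norm_sq,
      norm_sub_sq_real, norm_smul, norm_smul, real_inner_smul_left, real_inner_smul_right,
      real_inner_comm w u]
    simp only [Real.norm_eq_abs, mul_pow, sq_abs]
    ring
  have hyoung : 2 * l * (t * ⟪u, w⟫) ≤ l ^ 2 * ‖u‖ ^ 2 + t ^ 2 * ‖w‖ ^ 2 := by
    have := norm_sub_sq_real (l • u) (t • w)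
    rw [norm_smul, norm_smul, real_inner_smul_left, real_inner_smul_right] at this
    simp only [Real.norm_eq_abs, mul_pow, sq_abs] at this
    linarith [sq_nonneg ‖l • u - t • w‖]
  have ht : t ^ 2 * ‖w‖ ^ 2 ≤ 2 * l * (α ^ 2 * (1 + 16 * ε ^ 2) / l * ‖w‖ ^ 2) := by
    rw [show 2 * l * (α ^ 2 * (1 + 16 * ε ^ 2) / l * ‖w‖ ^ 2)
        = 2 * α ^ 2 * (1 + 16 * ε ^ 2) * ‖w‖ ^ 2 by field_simp]
    gcongr
    nlinarith [sq_nonneg (α * ε), sq_nonneg (α * (1 + 4 * ε))]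
  have hcross : t * ⟪u, w⟫ ≤ l / 2 * ‖u‖ ^ 2 + α ^ 2 * (1 + 16 * ε ^ 2) / l * ‖w‖ ^ 2 := by
    nlinarith
  have hsplit : α ^ 2 * ((1 + 16 * ε ^ 2) / l + 2) * ‖w‖ ^ 2
      = α ^ 2 * (1 + 16 * ε ^ 2) / l * ‖w‖ ^ 2 + 2 * α ^ 2 * ‖w‖ ^ 2 := by ring
  rw [hexpand, hsplit]
  linarith

section Consensus

variable {V H : Type*} [Fintype V] [NormedAddCommGroup H] [InnerProductSpace ℝ H]
  (A : V → V → ℝ)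

noncomputable def consensusEnergy (x : V → H) : ℝ := 1 / 2 * ∑ i, ∑ j, A i j * ‖x i - x j‖ ^ 2

def consensusGrad (x : V → H) : V → H := fun i => (2 : ℝ) • ∑ j, A i j • (x i - x j)

variable {A}

theorem sum_inner_consensusGrad (hA : ∀ i j, A i j = A j i) (x h : V → H) :
    ∑ i, ⟪consensusGrad A x i, h i⟫ = ∑ i, ∑ j, A i j * ⟪x i - x j, h i - h j⟫ := by
  have hswap : ∑ i, ∑ j, A i j * ⟪x i - x j, h j⟫ = -∑ i, ∑ j, A i j * ⟪x i - x j, h i⟫ := by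
    rw [Finset.sum_comm]
    simp only [← Finset.sum_neg_distrib]
    refine Finset.sum_congr rfl fun i _ => Finset.sum_congr rfl fun j _ => ?_
    rw [hA j i, ← neg_sub (x i), inner_neg_left, mul_neg]
  calc ∑ i, ⟪consensusGrad A x i, h i⟫ = 2 * ∑ i, ∑ j, A i j * ⟪x i - x j, h i⟫ := by
        simp only [consensusGrad, real_inner_smul_left, sum_inner, Finset.mul_sum]
    _ = ∑ i, ∑ j, A i j * ⟪x i - x j, h i - h j⟫ := by
        simp only [inner_sub_right, mul_sub, Finset.sum_sub_distrib, hswap]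
        ring

theorem consensusEnergy_add (hA : ∀ i j, A i j = A j i) (x h : V → H) :
    consensusEnergy A (x + h)
      = consensusEnergy A x + ∑ i, ⟪consensusGrad A x i, h i⟫ + consensusEnergy A h := by
  have hpoint : ∀ i j, ‖(x + h) i - (x + h) j‖ ^ 2
      = ‖x i - x j‖ ^ 2 + 2 * ⟪x i - x j, h i - h j⟫ + ‖h i - h j‖ ^ 2 := fun i j => by
    rw [Pi.add_apply, Pi.add_apply, add_sub_add_comm, norm_add_sq_real]
  simp only [consensusEnergy, sum_inner_consensusGrad hA, hpoint, mul_add,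
    Finset.sum_add_distrib, mul_left_comm (A _ _) 2, ← Finset.mul_sum]
  ring

theorem consensusEnergy_le (hA : ∀ i j, A i j = A j i) (hA_nonneg : ∀ i j, 0 ≤ A i j)
    (hA_row : ∀ i, ∑ j, A i j = 1) (h : V → H) :
    consensusEnergy A h ≤ 2 * ∑ i, ‖h i‖ ^ 2 := by
  have hpoint : ∀ i j, ‖h i - h j‖ ^ 2 ≤ 2 * ‖h i‖ ^ 2 + 2 * ‖h j‖ ^ 2 := fun i j => by
    nlinarith [parallelogram_law_with_norm ℝ (h i) (h j), sq_nonneg ‖h i + h j‖]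
  have hA_col : ∀ j, ∑ i, A i j = 1 := fun j => by simpa only [hA j] using hA_row j
  have hrow : ∑ i, ∑ j, A i j * ‖h i‖ ^ 2 = ∑ i, ‖h i‖ ^ 2 := by
    simp only [← Finset.sum_mul, hA_row, one_mul]
  have hcol : ∑ i, ∑ j, A i j * ‖h j‖ ^ 2 = ∑ i, ‖h i‖ ^ 2 := by
    rw [Finset.sum_comm]
    simp only [← Finset.sum_mul, hA_col, one_mul]
  calc consensusEnergy A h ≤ 1 / 2 * ∑ i, ∑ j, A i j * (2 * ‖h i‖ ^ 2 + 2 * ‖h j‖ ^ 2) := by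
        unfold consensusEnergy
        gcongr with i _ j _
        exacts [hA_nonneg i j, hpoint i j]
    _ = 2 * ∑ i, ‖h i‖ ^ 2 := by
        simp only [mul_add, Finset.sum_add_distrib, mul_left_comm (A _ _) 2, ← Finset.mul_sum,
          hrow, hcol]
        ring

theorem consensusEnergy_descent (hA : ∀ i j, A i j = A j i) (hA_nonneg : ∀ i j, 0 ≤ A i j)
    (hA_row : ∀ i, ∑ j, A i j = 1) (x h : V → H) :
    -∑ i, ⟪consensusGrad A x i, h i⟫ - 2 * ∑ i, ‖h i‖ ^ 2
      ≤ consensusEnergy A x - consensusEnergy A (x + h) := by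
  rw [consensusEnergy_add hA]
  linarith [consensusEnergy_le hA hA_nonneg hA_row h]

end Consensus

theorem per_iteration_consensus_inequality_general
    {V H : Type*} [Fintype V]
    [NormedAddCommGroup H] [InnerProductSpace ℝ H]
    (A : V → V → ℝ) (hA_symm : ∀ i j, A i j = A j i)
    (hA_nonneg : ∀ i j, 0 ≤ A i j) (hA_row : ∀ i, ∑ j, A i j = 1)
    (φ : (V → H) → ℝ)
    (hφ : ∀ x, φ x = (1 / 2 : ℝ) * ∑ i, ∑ j, A i j * ‖x i - x j‖ ^ 2)
    (G : (V → H) → V → H)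
    (hG : ∀ x i, G x i = (2 : ℝ) • ∑ j, A i j • (x i - x j))
    (ε α C : ℝ) (hε : 0 < ε) (hε' : ε < 1 / 2)
    (x g : V → H)
    (hg : Real.sqrt (∑ i, ‖g i‖ ^ 2) ≤ C / Real.sqrt (Fintype.card V))
    (x' : V → H) (hx' : x' = (x - ε • G x) + α • g) :
    ε / 2 * (1 - 2 * ε) * ∑ i, ‖G x i‖ ^ 2
      ≤ φ x - φ x'
        + α ^ 2 * ((1 + 16 * ε ^ 2) / (ε * (1 - 2 * ε)) + 2) * (C ^ 2 / Fintype.card V) := by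
  obtain rfl : φ = consensusEnergy A := funext hφ
  obtain rfl : G = consensusGrad A := funext fun x => funext (hG x)
  obtain rfl : x' = x + (α • g - ε • consensusGrad A x) := by rw [hx']; abel
  set u := WithLp.toLp 2 (consensusGrad A x)
  set w := WithLp.toLp 2 g
  have hw : ‖w‖ ^ 2 ≤ C ^ 2 / Fintype.card V := by
    rw [← PiLp.norm_eq_of_L2] at hg
    simpa only [div_pow, Real.sq_sqrt (Nat.cast_nonneg _)] using
      pow_le_pow_left₀ (norm_nonneg w) hg 2
  have hdescent := consensusEnergy_descent hA_symm hA_nonneg hA_row x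
    (α • g - ε • consensusGrad A x)
  have hK : 0 ≤ (1 + 16 * ε ^ 2) / (ε * (1 - 2 * ε)) + 2 := by
    have : 0 < ε * (1 - 2 * ε) := mul_pos hε (by linarith)
    positivity
  calc ε / 2 * (1 - 2 * ε) * ∑ i, ‖consensusGrad A x i‖ ^ 2
      = ε / 2 * (1 - 2 * ε) * ‖u‖ ^ 2 := by rw [PiLp.norm_sq_eq_of_L2]
    _ ≤ -⟪u, α • w - ε • u⟫ - 2 * ‖α • w - ε • u‖ ^ 2
        + α ^ 2 * ((1 + 16 * ε ^ 2) / (ε * (1 - 2 * ε)) + 2) * ‖w‖ ^ 2 :=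
      perturbed_gradient_step_bound hε hε' α u w
    _ ≤ _ := by
      rw [PiLp.inner_apply, PiLp.norm_sq_eq_of_L2]
      exact add_le_add hdescent (by gcongr)

/-- Per-iteration inequality (Euclidean instance, `L = 4`) of Step 2 of the proof of
Theorem 1: one consensus gradient step on `φ` followed by a bounded gradient step
decreases `φ` by at least `(ε/2)(1−2ε)‖G(x)‖²` up to an `O(α²)` error. -/
theorem per_iteration_consensus_inequality
    {V H : Type*} [Fintype V] [Nonempty V]
    [NormedAddCommGroup H] [InnerProductSpace ℝ H]
    (A : V → V → ℝ) (hA_symm : ∀ i j, A i j = A j i)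
    (hA_nonneg : ∀ i j, 0 ≤ A i j) (hA_row : ∀ i, ∑ j, A i j = 1)
    (φ : (V → H) → ℝ)
    (hφ : ∀ x, φ x = (1 / 2 : ℝ) * ∑ i, ∑ j, A i j * ‖x i - x j‖ ^ 2)
    (G : (V → H) → V → H)
    (hG : ∀ x i, G x i = (2 : ℝ) • ∑ j, A i j • (x i - x j))
    (ε α C : ℝ) (hε : 0 < ε) (hε' : ε < 1 / 2) (hα : 0 ≤ α) (hC : 0 ≤ C)
    (x g : V → H)
    (hg : Real.sqrt (∑ i, ‖g i‖ ^ 2) ≤ C / Real.sqrt (Fintype.card V))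
    (x' : V → H) (hx' : x' = (x - ε • G x) + α • g) :
    ε / 2 * (1 - 2 * ε) * ∑ i, ‖G x i‖ ^ 2
      ≤ φ x - φ x'
        + α ^ 2 * ((1 + 16 * ε ^ 2) / (ε * (1 - 2 * ε)) + 2) * (C ^ 2 / Fintype.card V) :=
  per_iteration_consensus_inequality_general A hA_symm hA_nonneg hA_row φ hφ G hG ε α C hε hε' x g
    hg x' hx'
end

section
/- Let V be a finite nonempty set and H a real Hilbert space. Let A : V → V → ℝ be symmetric, nonnegative, row-stochastic; set φ(x) = (1/2) ∑_{i,j} A i j ‖x i − x j‖² and G(x) i = 2 ∑_j A i j (x i − x j). For each i ∈ V let f^i : H → ℝ be concave and differentiable with ‖∇f^i(y)‖ ≤ C for all y ∈ H, and set F(x) = (1/|V|) ∑_i f^i(x i). Fix ε ∈ (0, 1/2) and step sizes α_k > 0 with ∑_{k=0}^∞ α_k = ∞ and ∑_{k=0}^∞ α_k² < ∞. Define iterates from any x^{(0)} : V → H by x̃^{(k)} = x^{(k)} − ε·G(x^{(k)}) and x^{(k+1)} i = x̃^{(k)} i + α_k · ∇f^i(x̃^{(k)} i). Then for every consensus configuration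 x* : V → H (x* i = x* j for all i, j): F(x*) ≤ sup_{k ∈ ℕ} F(x^{(k)}). -/
open Finset Matrix
open scoped RealInnerProductSpace

/-!
If `F x*` exceeded every `F (x k)` by a margin `δ > 0`, the squared distance
`D k = ∑ i, ‖x k i - x* i‖ ^ 2` to the consensus point would satisfy
`D (k + 1) ≤ D k - 2 |V| δ α k + 3 |V| C ^ 2 (α k) ^ 2`: the consensus step is mixing by the
doubly stochastic matrix `(1 - 2ε) I + 2ε A`, which fixes `x*` and, by Jensen's inequality for
`‖·‖ ^ 2`, does not increase `D`; each local ascent step is controlled by the gradient inequality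
of a concave function. Telescoping bounds `∑ α k` by `(D 0 + 3 |V| C ^ 2 ∑ (α k) ^ 2) / (2 |V| δ)`,
contradicting `∑ α k = ∞`.
-/

theorem ConcaveOn.inner_sub_le_sub_of_hasGradientAt {H : Type*} [NormedAddCommGroup H]
    [InnerProductSpace ℝ H] [CompleteSpace H] {s : Set H} {f : H → ℝ} {g p q : H}
    (hf : ConcaveOn ℝ s f) (hp : p ∈ s) (hq : q ∈ s) (hg : HasGradientAt f g p) :
    ⟪g, p - q⟫ ≤ f p - f q := by
  let ℓ : ℝ →ᵃ[ℝ] H := AffineMap.lineMap q p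
  have hℓ : HasDerivAt ℓ (p - q) 1 := AffineMap.hasDerivAt_lineMap
  have hderiv : HasDerivAt (f ∘ ℓ) ⟪g, p - q⟫ 1 := by
    have hg' : HasFDerivAt f (InnerProductSpace.toDual ℝ H g) (ℓ 1) := by
      simpa [ℓ] using hg.hasFDerivAt
    simpa [InnerProductSpace.toDual_apply_apply] using hg'.comp_hasDerivAt 1 hℓ
  have h₀ : (0 : ℝ) ∈ ℓ ⁻¹' s := by simpa [ℓ] using hq
  have h₁ : (1 : ℝ) ∈ ℓ ⁻¹' s := by simpa [ℓ] using hp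
  simpa [slope_def_field, ℓ] using
    (hf.comp_affineMap ℓ).le_slope_of_hasDerivAt h₀ h₁ one_pos hderiv

theorem ConcaveOn.norm_add_smul_sub_sq_le {H : Type*} [NormedAddCommGroup H]
    [InnerProductSpace ℝ H] [CompleteSpace H] {f : H → ℝ} {g : H → H} {C α : ℝ}
    (hf : ConcaveOn ℝ Set.univ f) (hg : ∀ y, HasGradientAt f (g y) y) (hC : ∀ y, ‖g y‖ ≤ C)
    (hα : 0 ≤ α) (y z : H) :
    ‖y + α • g y - z‖ ^ 2 ≤ ‖y - z‖ ^ 2 + 2 * α * (f (y + α • g y) - f z) + 3 * C ^ 2 * α ^ 2 := by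
  set y' := y + α • g y
  have hexpand : ‖y' - z‖ ^ 2 = ‖y - z‖ ^ 2 + 2 * α * ⟪g y, y - z⟫ + α ^ 2 * ‖g y‖ ^ 2 := by
    rw [show y' - z = (y - z) + α • g y by simp only [y']; abel, norm_add_sq_real,
      real_inner_smul_right, real_inner_comm, norm_smul, Real.norm_eq_abs, mul_pow, sq_abs]
    ring
  have hdescent : ⟪g y, y - z⟫ ≤ f y - f z :=
    hf.inner_sub_le_sub_of_hasGradientAt trivial trivial (hg y)
  have hC₀ : 0 ≤ C := (norm_nonneg _).trans (hC y)
  have hascent : f y - f y' ≤ α * C ^ 2 :=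
    calc f y - f y' ≤ -⟪g y', y' - y⟫ := by
          linarith [hf.inner_sub_le_sub_of_hasGradientAt trivial trivial (hg y') (q := y)]
      _ ≤ ‖g y'‖ * ‖y' - y‖ := (neg_le_abs _).trans (abs_real_inner_le_norm _ _)
      _ = ‖g y'‖ * (α * ‖g y‖) := by
          rw [add_sub_cancel_left, norm_smul, Real.norm_of_nonneg hα]
      _ ≤ C * (α * C) := by gcongr <;> exact hC _
      _ = α * C ^ 2 := by ring
  have hgsq : ‖g y‖ ^ 2 ≤ C ^ 2 := pow_le_pow_left₀ (norm_nonneg _) (hC y) 2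
  rw [hexpand]
  nlinarith [mul_le_mul_of_nonneg_left hdescent hα, mul_le_mul_of_nonneg_left hascent hα,
    mul_le_mul_of_nonneg_left hgsq (sq_nonneg α)]

theorem norm_sq_sum_smul_le {ι H : Type*} [NormedAddCommGroup H] [InnerProductSpace ℝ H]
    {t : Finset ι} {w : ι → ℝ} (hw₀ : ∀ i ∈ t, 0 ≤ w i) (hw₁ : ∑ i ∈ t, w i = 1) (v : ι → H) :
    ‖∑ i ∈ t, w i • v i‖ ^ 2 ≤ ∑ i ∈ t, w i * ‖v i‖ ^ 2 :=
  (convexOn_univ_norm.pow (fun _ _ => norm_nonneg _) 2).map_sum_le hw₀ hw₁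
    (fun _ _ => Set.mem_univ _)

section DoublyStochastic

variable {V H : Type*} [Fintype V] [DecidableEq V] [NormedAddCommGroup H] [InnerProductSpace ℝ H]
  {M : Matrix V V ℝ}

theorem sum_norm_sq_sum_smul_le_of_mem_doublyStochastic (hM : M ∈ doublyStochastic ℝ V)
    (v : V → H) : ∑ i, ‖∑ j, M i j • v j‖ ^ 2 ≤ ∑ j, ‖v j‖ ^ 2 :=
  calc ∑ i, ‖∑ j, M i j • v j‖ ^ 2
      ≤ ∑ i, ∑ j, M i j * ‖v j‖ ^ 2 := by
        gcongr with i
        exact norm_sq_sum_smul_le (fun j _ => nonneg_of_mem_doublyStochastic hM)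
          (sum_row_of_mem_doublyStochastic hM i) v
    _ = ∑ j, ‖v j‖ ^ 2 := by
        rw [sum_comm]
        simp_rw [← sum_mul, sum_col_of_mem_doublyStochastic hM, one_mul]

theorem sum_norm_sq_sum_smul_sub_le_of_mem_doublyStochastic (hM : M ∈ doublyStochastic ℝ V)
    (x z : V → H) (hz : ∀ i j, z i = z j) :
    ∑ i, ‖∑ j, M i j • x j - z i‖ ^ 2 ≤ ∑ i, ‖x i - z i‖ ^ 2 := by
  have hfix (i : V) : ∑ j, M i j • x j - z i = ∑ j, M i j • (x j - z j) := by
    simp_rw [smul_sub, sum_sub_distrib, hz _ i, ← sum_smul, sum_row_of_mem_doublyStochastic hM i,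
      one_smul]
  simpa only [hfix] using sum_norm_sq_sum_smul_le_of_mem_doublyStochastic hM (fun j => x j - z j)

theorem mem_doublyStochastic_of_symm (hsymm : ∀ i j, M i j = M j i) (hnonneg : ∀ i j, 0 ≤ M i j)
    (hrow : ∀ i, ∑ j, M i j = 1) : M ∈ doublyStochastic ℝ V :=
  mem_doublyStochastic_iff_sum.2 ⟨hnonneg, hrow, fun j => by simpa only [hsymm] using hrow j⟩

theorem one_sub_smul_one_add_smul_mem_doublyStochastic (hM : M ∈ doublyStochastic ℝ V) {t : ℝ}
    (ht₀ : 0 ≤ t) (ht₁ : t ≤ 1) : (1 - t) • (1 : Matrix V V ℝ) + t • M ∈ doublyStochastic ℝ V :=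
  convex_doublyStochastic (one_mem _) hM (by linarith) ht₀ (by ring)

theorem sub_smul_two_smul_sum_eq_sum_smul {A : V → V → ℝ} (hrow : ∀ i, ∑ j, A i j = 1)
    (x : V → H) (ε : ℝ) (i : V) : x i - ε • (2 : ℝ) • ∑ j, A i j • (x i - x j)
      = ∑ j, ((1 - 2 * ε) • (1 : Matrix V V ℝ) + (2 * ε) • of A) i j • x j := by
  have hrhs : ∑ j, ((1 - 2 * ε) • (1 : Matrix V V ℝ) + (2 * ε) • of A) i j • x j
      = (1 - 2 * ε) • x i + (2 * ε) • ∑ j, A i j • x j := by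
    simp only [of_apply, Matrix.add_apply, Matrix.smul_apply, one_apply, add_smul, sum_add_distrib,
      smul_eq_mul, mul_ite, mul_one, mul_zero, ite_smul, zero_smul, sum_ite_eq, mem_univ,
      if_true, mul_smul, smul_sum]
  simp_rw [hrhs, smul_sub, sum_sub_distrib, ← sum_smul, hrow, one_smul]
  module

theorem sum_norm_sq_gradient_step_sub_le [CompleteSpace H] (hM : M ∈ doublyStochastic ℝ V)
    {f : V → H → ℝ} {g : V → H → H} {C α : ℝ} (hf : ∀ i, ConcaveOn ℝ Set.univ (f i))
    (hg : ∀ i y, HasGradientAt (f i) (g i y) y) (hC : ∀ i y, ‖g i y‖ ≤ C) (hα : 0 ≤ α)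
    {x x' z : V → H} (hz : ∀ i j, z i = z j)
    (hx' : ∀ i, x' i = ∑ j, M i j • x j + α • g i (∑ j, M i j • x j)) :
    ∑ i, ‖x' i - z i‖ ^ 2 ≤ ∑ i, ‖x i - z i‖ ^ 2 + 2 * α * ∑ i, (f i (x' i) - f i (z i))
      + Fintype.card V * (3 * C ^ 2 * α ^ 2) :=
  calc ∑ i, ‖x' i - z i‖ ^ 2
      ≤ ∑ i, (‖∑ j, M i j • x j - z i‖ ^ 2 + 2 * α * (f i (x' i) - f i (z i))
          + 3 * C ^ 2 * α ^ 2) := by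
        gcongr with i
        rw [hx' i]
        exact (hf i).norm_add_smul_sub_sq_le (hg i) (hC i) hα _ _
    _ ≤ ∑ i, ‖x i - z i‖ ^ 2 + 2 * α * ∑ i, (f i (x' i) - f i (z i))
          + Fintype.card V * (3 * C ^ 2 * α ^ 2) := by
        rw [sum_add_distrib, sum_add_distrib, ← mul_sum, sum_const, card_univ, nsmul_eq_mul]
        gcongr ?_ + _ + _
        exact sum_norm_sq_sum_smul_sub_le_of_mem_doublyStochastic hM x z hz

end DoublyStochastic

theorem summable_of_descent {D α e : ℕ → ℝ} {a : ℝ} (ha : 0 < a) (hD : ∀ k, 0 ≤ D k)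
    (hα : ∀ k, 0 ≤ α k) (he₀ : ∀ k, 0 ≤ e k) (he : Summable e)
    (hstep : ∀ k, D (k + 1) + a * α k ≤ D k + e k) : Summable α := by
  have htelescope (K : ℕ) :
      D K + a * ∑ k ∈ range K, α k ≤ D 0 + ∑ k ∈ range K, e k := by
    induction K with
    | zero => simp
    | succ K ih => rw [sum_range_succ, sum_range_succ]; linarith [hstep K]
  refine summable_of_sum_range_le (c := (D 0 + ∑' k, e k) / a) hα fun K => (le_div_iff₀' ha).2 ?_
  linarith [htelescope K, hD K, he.sum_le_tsum (range K) (fun k _ => he₀ k)]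

theorem EReal.coe_le_iSup_coe_of_forall_exists_lt {ι : Type*} {u : ι → ℝ} {a : ℝ}
    (h : ∀ r < a, ∃ k, r < u k) : (a : EReal) ≤ ⨆ k, (u k : EReal) := by
  by_contra hlt
  obtain ⟨r, hsup_lt, hr⟩ := EReal.lt_iff_exists_real_btwn.1 (not_le.1 hlt)
  obtain ⟨k, hk⟩ := h r (EReal.coe_lt_coe_iff.1 hr)
  exact (EReal.coe_lt_coe_iff.2 hk).not_ge ((le_iSup _ k).trans hsup_lt.le)

theorem distributed_optimization_optimality_general
    {V H : Type*} [Fintype V] [Nonempty V]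
    [NormedAddCommGroup H] [InnerProductSpace ℝ H] [CompleteSpace H]
    (A : V → V → ℝ) (hA_symm : ∀ i j, A i j = A j i)
    (hA_nonneg : ∀ i j, 0 ≤ A i j) (hA_row : ∀ i, ∑ j, A i j = 1)
    (G : (V → H) → V → H)
    (hG : ∀ x i, G x i = (2 : ℝ) • ∑ j, A i j • (x i - x j))
    (C : ℝ)
    (f : V → H → ℝ) (g : V → H → H)
    (hconc : ∀ i, ConcaveOn ℝ Set.univ (f i))
    (hgrad : ∀ i y, HasGradientAt (f i) (g i y) y)
    (hbound : ∀ i y, ‖g i y‖ ≤ C)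
    (F : (V → H) → ℝ)
    (hF : ∀ x, F x = (1 / Fintype.card V : ℝ) * ∑ i, f i (x i))
    (ε : ℝ) (hε : 0 < ε) (hε' : ε < 1 / 2)
    (α : ℕ → ℝ) (hα_pos : ∀ k, 0 < α k)
    (hα_div : ¬ Summable α) (hα_sq : Summable fun k => (α k) ^ 2)
    (x : ℕ → V → H)
    (hx : ∀ k, x (k + 1)
      = fun i => (x k - ε • G (x k)) i + α k • g i ((x k - ε • G (x k)) i))
    (xstar : V → H) (hconsensus : ∀ i j, xstar i = xstar j) :
    (F xstar : EReal) ≤ ⨆ k : ℕ, (F (x k) : EReal) := by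
  classical
  refine EReal.coe_le_iSup_coe_of_forall_exists_lt fun r hr => ?_
  by_contra! hFr
  set M : Matrix V V ℝ := (1 - 2 * ε) • 1 + (2 * ε) • Matrix.of A
  have hM : M ∈ doublyStochastic ℝ V :=
    one_sub_smul_one_add_smul_mem_doublyStochastic
      (mem_doublyStochastic_of_symm hA_symm hA_nonneg hA_row) (by linarith) (by linarith)
  have hx' (k : ℕ) (i : V) : x (k + 1) i = ∑ j, M i j • x k j + α k • g i (∑ j, M i j • x k j) := by
    rw [hx k]
    simp only [Pi.sub_apply, Pi.smul_apply, hG, sub_smul_two_smul_sum_eq_sum_smul hA_row, M]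
  set n : ℝ := (Fintype.card V : ℝ)
  have hn : 0 < n := Nat.cast_pos.2 Fintype.card_pos
  have hsum_f (y : V → H) : ∑ i, f i (y i) = n * F y := by
    rw [hF]; field_simp
  refine hα_div (summable_of_descent (D := fun k => ∑ i, ‖x k i - xstar i‖ ^ 2)
    (a := 2 * n * (F xstar - r)) (e := fun k => n * (3 * C ^ 2 * α k ^ 2)) (by nlinarith)
    (fun k => by positivity) (fun k => (hα_pos k).le) (fun k => by positivity)
    ((hα_sq.mul_left (3 * C ^ 2)).mul_left n) fun k => ?_)
  have hstep := sum_norm_sq_gradient_step_sub_le hM hconc hgrad hbound (hα_pos k).le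
    hconsensus (hx' k)
  have hgap : 2 * α k * ∑ i, (f i (x (k + 1) i) - f i (xstar i))
      ≤ 2 * α k * (n * (r - F xstar)) := by
    rw [sum_sub_distrib, hsum_f, hsum_f, ← mul_sub]
    gcongr
    exacts [by linarith [hα_pos k], hFr _]
  linarith

/-- Optimality guarantee (part 2 of Theorem 1, Euclidean instance): along the iterates of
Algorithm 1 — interleaving consensus gradient steps on the aggregate distance function with
local concave-objective gradient ascent steps, under Robbins–Monro step sizes and bounded
local gradients — the running supremum of the averaged objective `F` dominates the value of
`F` at every consensus configuration. -/
theorem distributed_optimization_optimality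
    {V H : Type*} [Fintype V] [Nonempty V]
    [NormedAddCommGroup H] [InnerProductSpace ℝ H] [CompleteSpace H]
    (A : V → V → ℝ) (hA_symm : ∀ i j, A i j = A j i)
    (hA_nonneg : ∀ i j, 0 ≤ A i j) (hA_row : ∀ i, ∑ j, A i j = 1)
    (G : (V → H) → V → H)
    (hG : ∀ x i, G x i = (2 : ℝ) • ∑ j, A i j • (x i - x j))
    (C : ℝ) (hC : 0 ≤ C)
    (f : V → H → ℝ) (g : V → H → H)
    (hconc : ∀ i, ConcaveOn ℝ Set.univ (f i))
    (hgrad : ∀ i y, HasGradientAt (f i) (g i y) y)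
    (hbound : ∀ i y, ‖g i y‖ ≤ C)
    (F : (V → H) → ℝ)
    (hF : ∀ x, F x = (1 / Fintype.card V : ℝ) * ∑ i, f i (x i))
    (ε : ℝ) (hε : 0 < ε) (hε' : ε < 1 / 2)
    (α : ℕ → ℝ) (hα_pos : ∀ k, 0 < α k)
    (hα_div : ¬ Summable α) (hα_sq : Summable fun k => (α k) ^ 2)
    (x : ℕ → V → H)
    (hx : ∀ k, x (k + 1)
      = fun i => (x k - ε • G (x k)) i + α k • g i ((x k - ε • G (x k)) i))
    (xstar : V → H) (hconsensus : ∀ i j, xstar i = xstar j) :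
    (F xstar : EReal) ≤ ⨆ k : ℕ, (F (x k) : EReal) :=
  distributed_optimization_optimality_general A hA_symm hA_nonneg hA_row G hG C f g hconc hgrad
    hbound F hF ε hε hε' α hα_pos hα_div hα_sq x hx xstar hconsensus
end
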